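/- arXiv:quant-ph/0208028 — 2 statements merged into one kernel-verified Lean document; each statement's English description precedes it below -/
import Mathlib

section
/- Let {μ_k : 1 ≤ k ≤ m} be projections onto orthonormal product vectors forming an orthogonal UPB in an N-dimensional tensor product space, μ₀ = (1/m)Σ μ_k, ε/m = inf{Tr(μ₀σ) : σ separable} > 0, and suppose Nε/m < 1. Set s₀ = 1 − εN/m, τ₀ = (1−s₀)D₀ + s₀ρ₀ where ρ₀ = (1/(N−m))(I − mμ₀) and D₀ = I/N. Then Tr(τ₀μ₀) = ε/m, and with c₀ = Tr(τ₀(ρ₀ − τ₀)), the Hermitian matrix W₀ = τ₀ + c₀I − ρ₀ satisfies Tr(W₀σ) ≥ 0 for all separable densities σ and Tr(W₀ρ₀) < 0; hence W₀ is an entanglement witness for ρ₀ and ρ₀ is inseparable. -/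
open Matrix
open scoped ComplexOrder

/-- The rank-one projection `|φ⟩⟨φ|`. -/
def outer {n : Type*} [Fintype n] (φ : n → ℂ) : Matrix n n ℂ :=
  Matrix.vecMulVec φ (star φ)

/-- The set of separable densities on `ℂ^{d₁} ⊗ ℂ^{d₂}`. -/
def SepSet (d₁ d₂ : ℕ) : Set (Matrix (Fin d₁ × Fin d₂) (Fin d₁ × Fin d₂) ℂ) :=
  convexHull ℝ {M | ∃ (a : Fin d₁ → ℂ) (b : Fin d₂ → ℂ),
    star a ⬝ᵥ a = 1 ∧ star b ⬝ᵥ b = 1 ∧ M = outer (fun p => a p.1 * b p.2)}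

lemma outer_trace {n : Type*} [Fintype n] (u : n → ℂ) :
    Matrix.trace (outer u) = star u ⬝ᵥ u := by
  simp [outer, Matrix.trace, Matrix.vecMulVec_apply, dotProduct, Matrix.diag, mul_comm]

lemma trace_outer_mul_outer {n : Type*} [Fintype n] (u v : n → ℂ) :
    Matrix.trace (outer u * outer v) = (star u ⬝ᵥ v) * (star v ⬝ᵥ u) := by
  simp only [outer, Matrix.trace, Matrix.diag, Matrix.mul_apply, Matrix.vecMulVec_apply,
    dotProduct, Finset.sum_mul_sum, Pi.star_apply]
  rw [Finset.sum_comm]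
  exact Finset.sum_congr rfl fun i _ => Finset.sum_congr rfl fun j _ => by ring

lemma trace_outer_mul_outer' {n : Type*} [Fintype n] (u v : n → ℂ) :
    Matrix.trace (outer u * outer v) = ((Complex.normSq (star u ⬝ᵥ v) : ℝ) : ℂ) := by
  rw [trace_outer_mul_outer]
  have h : star v ⬝ᵥ u = (starRingEnd ℂ) (star u ⬝ᵥ v) := by
    rw [Matrix.star_dotProduct]; rfl
  rw [h, Complex.mul_conj]

set_option maxHeartbeats 1600000 in
/-- Orthogonal UPB construction of the entanglement witness `W₀` for `ρ₀`:
with `μ₀ = (1/m)∑ μ_k`, `ε/m = inf {Tr(μ₀σ) : σ ∈ S} > 0`, `Nε/m < 1`,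
`s₀ = 1 - εN/m`, `ρ₀ = (1/(N-m))(I - mμ₀)`, `τ₀ = (1-s₀)D₀ + s₀ρ₀`,
`c₀ = Tr(τ₀(ρ₀ - τ₀))` and `W₀ = τ₀ + c₀I - ρ₀`, one has `Tr(τ₀μ₀) = ε/m`,
`Tr(W₀σ) ≥ 0` for all separable `σ`, and `Tr(W₀ρ₀) < 0`; hence `W₀` is an
entanglement witness for `ρ₀` and `ρ₀` is inseparable. -/
theorem stmt7 {d₁ d₂ m N : ℕ} (hN : N = d₁ * d₂) (hm : m < N) (hm0 : 0 < m)
    (α : Fin m → Fin d₁ → ℂ) (β : Fin m → Fin d₂ → ℂ)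
    (φ : Fin m → Fin d₁ × Fin d₂ → ℂ)
    (hprod : ∀ k, φ k = fun p => α k p.1 * β k p.2)
    (horth : ∀ k l, star (φ k) ⬝ᵥ φ l = if k = l then 1 else 0)
    (hUPB : ∀ (a : Fin d₁ → ℂ) (b : Fin d₂ → ℂ),
      (∀ k, star (fun p : Fin d₁ × Fin d₂ => a p.1 * b p.2) ⬝ᵥ φ k = 0) →
      (fun p : Fin d₁ × Fin d₂ => a p.1 * b p.2) = 0)
    (μ₀ D₀ ρ₀ : Matrix (Fin d₁ × Fin d₂) (Fin d₁ × Fin d₂) ℂ)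
    (hμ₀ : μ₀ = (m : ℂ)⁻¹ • ∑ k, outer (φ k))
    (hD₀ : D₀ = (N : ℂ)⁻¹ • 1)
    (hρ₀ : ρ₀ = ((N : ℂ) - (m : ℂ))⁻¹ • (1 - (m : ℂ) • μ₀))
    (ε : ℝ)
    (hε : ε / m = sInf ((fun σ => (Matrix.trace (μ₀ * σ)).re) '' SepSet d₁ d₂))
    (hεpos : 0 < ε) (hεsmall : N * ε / m < 1)
    (s₀ : ℝ) (hs₀ : s₀ = 1 - ε * N / m)
    (τ₀ : Matrix (Fin d₁ × Fin d₂) (Fin d₁ × Fin d₂) ℂ)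
    (hτ₀ : τ₀ = ((1 : ℂ) - (s₀ : ℂ)) • D₀ + (s₀ : ℂ) • ρ₀)
    (c₀ : ℂ) (hc₀ : c₀ = Matrix.trace (τ₀ * (ρ₀ - τ₀)))
    (W₀ : Matrix (Fin d₁ × Fin d₂) (Fin d₁ × Fin d₂) ℂ)
    (hW₀ : W₀ = τ₀ + c₀ • 1 - ρ₀) :
    Matrix.trace (τ₀ * μ₀) = ((ε / m : ℝ) : ℂ) ∧
    (∀ σ ∈ SepSet d₁ d₂, 0 ≤ (Matrix.trace (W₀ * σ)).re) ∧
    (Matrix.trace (W₀ * ρ₀)).re < 0 ∧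
    ρ₀ ∉ SepSet d₁ d₂ := by
  have hNpos : 0 < N := lt_trans hm0 hm
  have hmR : (0:ℝ) < m := by exact_mod_cast hm0
  have hNR : (0:ℝ) < N := by exact_mod_cast hNpos
  have hNmR : (0:ℝ) < (N:ℝ) - m := by
    have : (m:ℝ) < N := by exact_mod_cast hm
    linarith
  have hcm : (m:ℂ) ≠ 0 := Nat.cast_ne_zero.mpr hm0.ne'
  have hcN : (N:ℂ) ≠ 0 := Nat.cast_ne_zero.mpr hNpos.ne'
  have hNm : (N:ℂ) - (m:ℂ) ≠ 0 := by
    have : (m:ℂ) ≠ (N:ℂ) := by exact_mod_cast hm.ne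
    exact sub_ne_zero.mpr this.symm
  have hsC : (s₀:ℂ) = 1 - (ε:ℂ) * N / m := by rw [hs₀]; push_cast; ring
  set P : Matrix (Fin d₁ × Fin d₂) (Fin d₁ × Fin d₂) ℂ := ∑ k, outer (φ k) with hPdef
  -- basic traces
  have htrone : Matrix.trace (1 : Matrix (Fin d₁ × Fin d₂) (Fin d₁ × Fin d₂) ℂ) = (N:ℂ) := by
    rw [Matrix.trace_one]; simp [hN]
  have htrP : Matrix.trace P = (m:ℂ) := by
    rw [hPdef, Matrix.trace_sum]
    simp [outer_trace, horth]
  have htrPP : Matrix.trace (P * P) = (m:ℂ) := by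
    rw [hPdef, Finset.sum_mul_sum, Matrix.trace_sum]
    simp only [Matrix.trace_sum, trace_outer_mul_outer, horth]
    simp
  -- matrices as combinations of 1 and P
  set r : ℂ := ((N:ℂ) - m)⁻¹ with hrr
  set ta : ℂ := (1 - (s₀:ℂ))/N + (s₀:ℂ) * r with hta
  set tb : ℂ := -((s₀:ℂ) * r) with htb
  have hmμ : (m:ℂ) • μ₀ = P := by rw [hμ₀, smul_smul, mul_inv_cancel₀ hcm, one_smul]
  have hρeq : ρ₀ = r • 1 + (-r) • P := by
    rw [hρ₀, ← hmμ]
    module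
  have hτeq : τ₀ = ta • 1 + tb • P := by
    rw [hτ₀, hD₀, hρeq, hta, htb]
    have : (1:ℂ)/N = (N:ℂ)⁻¹ := one_div _
    module
  -- generic trace computations
  have keyσ : ∀ (a b : ℂ) (σ : Matrix (Fin d₁ × Fin d₂) (Fin d₁ × Fin d₂) ℂ),
      Matrix.trace ((a • 1 + b • P) * σ) = a * Matrix.trace σ + b * Matrix.trace (P * σ) := by
    intro a b σ
    rw [Matrix.add_mul, Matrix.smul_mul, Matrix.smul_mul, Matrix.one_mul, Matrix.trace_add,
      Matrix.trace_smul, Matrix.trace_smul, smul_eq_mul, smul_eq_mul]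
  have key1 : ∀ (c d : ℂ), Matrix.trace (c • (1:Matrix (Fin d₁ × Fin d₂) (Fin d₁ × Fin d₂) ℂ)
      + d • P) = c * N + d * m := by
    intro c d
    rw [Matrix.trace_add, Matrix.trace_smul, Matrix.trace_smul, htrone, htrP,
      smul_eq_mul, smul_eq_mul]
  have keyP : ∀ (c d : ℂ), Matrix.trace (P * (c • 1 + d • P)) = c * m + d * m := by
    intro c d
    rw [Matrix.mul_add, Matrix.mul_smul, Matrix.mul_smul, Matrix.mul_one, Matrix.trace_add,
      Matrix.trace_smul, Matrix.trace_smul, htrP, htrPP, smul_eq_mul, smul_eq_mul]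
  have hdiff : ρ₀ - τ₀ = (r - ta) • 1 + (-r - tb) • P := by
    rw [hρeq, hτeq]; module
  have hc : c₀ = ta * ((r - ta) * N + (-r - tb) * m) + tb * ((r - ta) * m + (-r - tb) * m) := by
    rw [hc₀, hdiff, hτeq, keyσ, key1, keyP]
  -- the central formula
  have hWσ : ∀ σ, Matrix.trace σ = 1 →
      Matrix.trace (W₀ * σ) = ((1 - (s₀:ℂ)) * r) * (Matrix.trace (P * σ) - (ε:ℂ)) := by
    intro σ hσ1
    rw [hW₀, Matrix.sub_mul, Matrix.add_mul, Matrix.smul_mul, Matrix.one_mul,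
      Matrix.trace_sub, Matrix.trace_add, Matrix.trace_smul, smul_eq_mul, hσ1, mul_one,
      hτeq, hρeq, keyσ, keyσ, hσ1, hc, hta, htb, hrr, hsC]
    field_simp
    ring
  -- part 1
  have part1 : Matrix.trace (τ₀ * μ₀) = ((ε / m : ℝ) : ℂ) := by
    rw [hμ₀, Matrix.mul_smul, Matrix.trace_smul, smul_eq_mul, hτeq]
    have : Matrix.trace ((ta • 1 + tb • P) * P) = ta * m + tb * m := by
      rw [keyσ, htrP, htrPP]
    rw [this, hta, htb, hrr, hsC]
    push_cast
    field_simp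
    ring
  -- separable states: trace one and positivity against P
  set C : Set (Matrix (Fin d₁ × Fin d₂) (Fin d₁ × Fin d₂) ℂ) :=
    {σ | Matrix.trace σ = 1 ∧ 0 ≤ (Matrix.trace (P * σ)).re} with hCdef
  have hbase : {M | ∃ (a : Fin d₁ → ℂ) (b : Fin d₂ → ℂ),
      star a ⬝ᵥ a = 1 ∧ star b ⬝ᵥ b = 1 ∧ M = outer (fun p => a p.1 * b p.2)} ⊆ C := by
    rintro M ⟨a, b, ha, hb, rfl⟩
    constructor
    · rw [outer_trace]
      have hfact : star (fun p : Fin d₁ × Fin d₂ => a p.1 * b p.2)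
          ⬝ᵥ (fun p : Fin d₁ × Fin d₂ => a p.1 * b p.2) = (star a ⬝ᵥ a) * (star b ⬝ᵥ b) := by
        simp only [dotProduct, Pi.star_apply, star_mul', Fintype.sum_prod_type,
          Finset.sum_mul_sum]
        exact Finset.sum_congr rfl fun i _ => Finset.sum_congr rfl fun j _ => by ring
      rw [hfact, ha, hb, one_mul]
    · rw [hPdef, Matrix.sum_mul, Matrix.trace_sum]
      simp only [trace_outer_mul_outer']
      rw [← Complex.ofReal_sum, Complex.ofReal_re]
      exact Finset.sum_nonneg fun k _ => Complex.normSq_nonneg _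
  have hconv : Convex ℝ C := by
    rintro σ₁ ⟨h1a, h1b⟩ σ₂ ⟨h2a, h2b⟩ p q hp hq hpq
    constructor
    · rw [Matrix.trace_add, Matrix.trace_smul, Matrix.trace_smul, h1a, h2a]
      simp only [Complex.real_smul, mul_one]
      rw [← Complex.ofReal_add, hpq, Complex.ofReal_one]
    · rw [Matrix.mul_add, Matrix.mul_smul, Matrix.mul_smul, Matrix.trace_add,
        Matrix.trace_smul, Matrix.trace_smul, Complex.add_re, Complex.real_smul,
        Complex.real_smul, Complex.re_ofReal_mul, Complex.re_ofReal_mul]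
      exact add_nonneg (mul_nonneg hp h1b) (mul_nonneg hq h2b)
  have hCsub : SepSet d₁ d₂ ⊆ C := by
    unfold SepSet
    exact convexHull_min hbase hconv
  have hcastm : ((m:ℂ))⁻¹ = (((m:ℝ)⁻¹ : ℝ) : ℂ) := by push_cast; ring
  have hbdd : BddBelow ((fun σ => (Matrix.trace (μ₀ * σ)).re) '' SepSet d₁ d₂) := by
    refine ⟨0, ?_⟩
    rintro y ⟨σ, hσ, rfl⟩
    obtain ⟨h1, h2⟩ := hCsub hσ
    simp only
    rw [hμ₀, Matrix.smul_mul, Matrix.trace_smul, smul_eq_mul, hcastm, Complex.re_ofReal_mul]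
    exact mul_nonneg (inv_nonneg.mpr hmR.le) h2
  have hμlb : ∀ σ ∈ SepSet d₁ d₂, ε ≤ (Matrix.trace (P * σ)).re := by
    intro σ hσ
    have h := csInf_le hbdd ⟨σ, hσ, rfl⟩
    rw [← hε] at h
    simp only at h
    rw [hμ₀, Matrix.smul_mul, Matrix.trace_smul, smul_eq_mul, hcastm,
      Complex.re_ofReal_mul] at h
    have hx : ε ≤ (m:ℝ)⁻¹ * (Matrix.trace (P * σ)).re * m := by
      have := (div_le_iff₀ hmR).mp h
      linarith
    rwa [inv_mul_eq_div, div_mul_cancel₀ _ hmR.ne'] at hx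
  have hcoef : ((1 - (s₀:ℂ)) * r) = (((1 - s₀)/((N:ℝ) - m) : ℝ) : ℂ) := by
    rw [hrr]
    push_cast
    rw [div_eq_mul_inv]
  have h1s : (0:ℝ) < 1 - s₀ := by
    rw [hs₀]
    have : (0:ℝ) < ε * N / m := by positivity
    linarith
  have part2 : ∀ σ ∈ SepSet d₁ d₂, 0 ≤ (Matrix.trace (W₀ * σ)).re := by
    intro σ hσ
    obtain ⟨h1, _⟩ := hCsub hσ
    rw [hWσ σ h1, hcoef, Complex.re_ofReal_mul, Complex.sub_re, Complex.ofReal_re]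
    have hcnn : (0:ℝ) ≤ (1 - s₀)/((N:ℝ) - m) := div_nonneg h1s.le hNmR.le
    have := hμlb σ hσ
    exact mul_nonneg hcnn (by linarith)
  have htrρ1 : Matrix.trace ρ₀ = 1 := by
    rw [hρeq, key1, hrr]
    field_simp
    ring
  have htrPρ : Matrix.trace (P * ρ₀) = 0 := by
    rw [hρeq, keyP]; ring
  have part3 : (Matrix.trace (W₀ * ρ₀)).re < 0 := by
    rw [hWσ ρ₀ htrρ1, htrPρ, hcoef, zero_sub, Complex.re_ofReal_mul, Complex.neg_re,
      Complex.ofReal_re]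
    have hcpos : (0:ℝ) < (1 - s₀)/((N:ℝ) - m) := div_pos h1s hNmR
    nlinarith
  exact ⟨part1, part2, part3, fun hmem => absurd part3 (not_lt.mpr (part2 ρ₀ hmem))⟩
end

section
/- If {μ_k : 1 ≤ k ≤ m} come from an orthogonal UPB with ε/m = inf{Tr(μ₀σ) : σ ∈ S} and 0 < Nε/m < 1, then for the segment λ(t) = (1−t)D₀ + tρ(p) (ρ(p) as in the far-face construction with b = 1/p_max), λ(t) is inseparable whenever s₀[(N p_max − 1)/(N/m − 1)] < t ≤ 1, where s₀ = 1 − εN/m; moreover λ(t) has positive partial transposes, being a convex combination of PPT states. -/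
open Matrix
open scoped ComplexOrder

/-- The partial transpose with respect to the second tensor factor. -/
def ptrans {d₁ d₂ : ℕ} (M : Matrix (Fin d₁ × Fin d₂) (Fin d₁ × Fin d₂) ℂ) :
    Matrix (Fin d₁ × Fin d₂) (Fin d₁ × Fin d₂) ℂ :=
  fun p q => M (p.1, q.2) (q.1, p.2)

/-!
On separable states the functional `σ ↦ Re Tr(μ₀ σ)` is bounded below by `ε/m`, the infimum
defining `ε` (it is finite since `μ₀ ≥ 0`). Along the segment it is affine, equal to `1/N` at
`D₀` and to `(1 - b/m)/(N - b)` at `ρ(p)`, and it drops below `ε/m = (1 - s₀)/N` exactly past the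
stated threshold, so `λ(t)` cannot be separable.

The partial transpose sends the orthonormal product vectors `α_k ⊗ β_k` to the orthonormal
family `α_k ⊗ β̄_k`, so `ρ(p)^Γ = (1 - b Σ p_k |α_k ⊗ β̄_k⟩⟨α_k ⊗ β̄_k|)/(N - b)` is positive
semidefinite because `b p_k ≤ 1`; as `D₀^Γ = D₀`, `λ(t)^Γ` is a convex combination of positive
semidefinite matrices.
-/

section Outer

variable {n : Type*} [Fintype n]

lemma posSemidef_outer (v : n → ℂ) : (outer v).PosSemidef :=
  posSemidef_vecMulVec_self_star v

lemma trace_outer (v : n → ℂ) : trace (outer v) = star v ⬝ᵥ v := by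
  rw [outer, trace_vecMulVec, dotProduct_comm]

lemma trace_mul_outer (A : Matrix n n ℂ) (v : n → ℂ) :
    trace (A * outer v) = star v ⬝ᵥ (A *ᵥ v) := by
  rw [outer, mul_vecMulVec, trace_vecMulVec, dotProduct_comm]

lemma outer_mul_outer (u v : n → ℂ) :
    outer u * outer v = (star u ⬝ᵥ v) • vecMulVec u (star v) := by
  rw [outer, outer, vecMulVec_mul_vecMulVec, vecMulVec_smul]

end Outer

section Orthonormal

variable {ι n : Type*} [Fintype ι] [DecidableEq ι] [Fintype n] {φ : ι → n → ℂ}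

lemma sum_outer_mul_outer (hφ : ∀ k l, star (φ k) ⬝ᵥ φ l = if k = l then 1 else 0) (l : ι) :
    (∑ k, outer (φ k)) * outer (φ l) = outer (φ l) := by
  simp only [Finset.sum_mul, outer_mul_outer, hφ, ite_smul, one_smul, zero_smul,
    Finset.sum_ite_eq', Finset.mem_univ, if_true]
  rfl

lemma sum_outer_mul_self (hφ : ∀ k l, star (φ k) ⬝ᵥ φ l = if k = l then 1 else 0) :
    (∑ k, outer (φ k)) * (∑ k, outer (φ k)) = ∑ k, outer (φ k) := by
  rw [Finset.mul_sum]
  exact Finset.sum_congr rfl fun l _ => sum_outer_mul_outer hφ l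

lemma trace_sum_outer (hφ : ∀ k l, star (φ k) ⬝ᵥ φ l = if k = l then 1 else 0) :
    trace (∑ k, outer (φ k)) = Fintype.card ι := by
  simp [trace_sum, trace_outer, hφ]

lemma trace_sum_outer_mul_sum_smul_outer
    (hφ : ∀ k l, star (φ k) ⬝ᵥ φ l = if k = l then 1 else 0) (w : ι → ℂ) :
    trace ((∑ k, outer (φ k)) * ∑ l, w l • outer (φ l)) = ∑ l, w l := by
  simp [Finset.mul_sum, sum_outer_mul_outer hφ, trace_sum, trace_outer, hφ]

lemma posSemidef_one_sub_sum_outer [DecidableEq n]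
    (hφ : ∀ k l, star (φ k) ⬝ᵥ φ l = if k = l then 1 else 0) :
    (1 - ∑ k, outer (φ k)).PosSemidef := by
  set P := ∑ k, outer (φ k)
  have hP : Pᴴ = P := by
    simp only [P, conjTranspose_sum, outer, conjTranspose_vecMulVec, star_star]
  have hidem : (1 - P)ᴴ * (1 - P) = 1 - P := by
    rw [conjTranspose_sub, conjTranspose_one, hP, sub_mul, mul_sub, mul_sub, sum_outer_mul_self hφ]
    simp [P]
  exact hidem ▸ posSemidef_conjTranspose_mul_self (1 - P)

lemma posSemidef_one_sub_sum_smul_outer [DecidableEq n]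
    (hφ : ∀ k l, star (φ k) ⬝ᵥ φ l = if k = l then 1 else 0) {w : ι → ℝ} (hw : ∀ k, w k ≤ 1) :
    (1 - ∑ k, (w k : ℂ) • outer (φ k)).PosSemidef := by
  have hsplit : 1 - ∑ k, (w k : ℂ) • outer (φ k) =
      (1 - ∑ k, outer (φ k)) + ∑ k, ((1 - w k : ℝ) : ℂ) • outer (φ k) := by
    simp [sub_smul, Finset.sum_sub_distrib]
  rw [hsplit]
  refine (posSemidef_one_sub_sum_outer hφ).add (posSemidef_sum _ fun k _ => ?_)
  exact (posSemidef_outer _).smul (Complex.zero_le_real.mpr (sub_nonneg.mpr (hw k)))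

end Orthonormal

section Separable

variable {d₁ d₂ : ℕ} {A : Matrix (Fin d₁ × Fin d₂) (Fin d₁ × Fin d₂) ℂ}

lemma re_trace_mul_nonneg_of_mem_sepSet (hA : A.PosSemidef) {σ} (hσ : σ ∈ SepSet d₁ d₂) :
    0 ≤ (trace (A * σ)).re := by
  have hlin : IsLinearMap ℝ fun σ : Matrix (Fin d₁ × Fin d₂) (Fin d₁ × Fin d₂) ℂ =>
      (trace (A * σ)).re :=
    ⟨fun σ τ => by simp [mul_add], fun r σ => by simp [trace_smul]⟩
  refine convexHull_min ?_ (convex_halfSpace_ge hlin 0) hσ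
  rintro _ ⟨a, b, -, -, rfl⟩
  rw [Set.mem_ofPred_eq, trace_mul_outer]
  exact hA.re_dotProduct_nonneg _

lemma notMem_sepSet_of_re_trace_lt_sInf (hA : A.PosSemidef) {σ}
    (h : (trace (A * σ)).re < sInf ((fun τ => (trace (A * τ)).re) '' SepSet d₁ d₂)) :
    σ ∉ SepSet d₁ d₂ := fun hσ =>
  h.not_ge <| csInf_le ⟨0, by rintro _ ⟨τ, hτ, rfl⟩; exact re_trace_mul_nonneg_of_mem_sepSet hA hτ⟩
    ⟨σ, hσ, rfl⟩

end Separable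

section ProductVectors

variable {ι m₁ m₂ : Type*} [Fintype m₁] [Fintype m₂]

lemma star_prod_dotProduct_prod (a a' : m₁ → ℂ) (c c' : m₂ → ℂ) :
    star (fun q : m₁ × m₂ => a q.1 * c q.2) ⬝ᵥ (fun q => a' q.1 * c' q.2) =
      (star a ⬝ᵥ a') * (star c ⬝ᵥ c') := by
  simp only [dotProduct, Pi.star_apply, star_mul', Fintype.sum_prod_type, Finset.sum_mul_sum]
  exact Finset.sum_congr rfl fun i _ => Finset.sum_congr rfl fun j _ => by ring

lemma orthonormal_prod_star_snd [DecidableEq ι] {α : ι → m₁ → ℂ} {β : ι → m₂ → ℂ}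
    (h : ∀ k l, star (fun q : m₁ × m₂ => α k q.1 * β k q.2) ⬝ᵥ (fun q => α l q.1 * β l q.2) =
      if k = l then 1 else 0) (k l : ι) :
    star (fun q : m₁ × m₂ => α k q.1 * star (β k q.2)) ⬝ᵥ
      (fun q => α l q.1 * star (β l q.2)) = if k = l then 1 else 0 := by
  have hconj : star (star (β k)) ⬝ᵥ star (β l) = star (star (β k) ⬝ᵥ β l) := by
    rw [star_dotProduct_star, dotProduct_comm]
  have h' := h k l
  rw [star_prod_dotProduct_prod] at h'
  refine (star_prod_dotProduct_prod (α k) (α l) (star (β k)) (star (β l))).trans ?_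
  rw [hconj]
  split_ifs at h' ⊢ with hkl
  · subst hkl
    rwa [← star_dotProduct (β k) (β k)]
  · rcases mul_eq_zero.mp h' with h0 | h0 <;> simp [h0]

end ProductVectors

section PartialTranspose

variable {d₁ d₂ : ℕ}

lemma ptrans_add (A B : Matrix (Fin d₁ × Fin d₂) (Fin d₁ × Fin d₂) ℂ) :
    ptrans (A + B) = ptrans A + ptrans B := rfl

lemma ptrans_sub (A B : Matrix (Fin d₁ × Fin d₂) (Fin d₁ × Fin d₂) ℂ) :
    ptrans (A - B) = ptrans A - ptrans B := rfl

lemma ptrans_smul (c : ℂ) (A : Matrix (Fin d₁ × Fin d₂) (Fin d₁ × Fin d₂) ℂ) :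
    ptrans (c • A) = c • ptrans A := rfl

lemma ptrans_sum {ι : Type*} (s : Finset ι)
    (f : ι → Matrix (Fin d₁ × Fin d₂) (Fin d₁ × Fin d₂) ℂ) :
    ptrans (∑ i ∈ s, f i) = ∑ i ∈ s, ptrans (f i) := by
  ext p q
  simp only [ptrans, Matrix.sum_apply]

lemma ptrans_one : ptrans (1 : Matrix (Fin d₁ × Fin d₂) (Fin d₁ × Fin d₂) ℂ) = 1 := by
  ext ⟨i, j⟩ ⟨k, l⟩
  simp only [ptrans, one_apply, Prod.mk.injEq]
  grind

lemma ptrans_outer_prod (a : Fin d₁ → ℂ) (c : Fin d₂ → ℂ) :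
    ptrans (outer fun q : Fin d₁ × Fin d₂ => a q.1 * c q.2) =
      outer fun q => a q.1 * star (c q.2) := by
  ext ⟨i, j⟩ ⟨k, l⟩
  simp only [ptrans, outer, vecMulVec_apply, Pi.star_apply, star_mul', star_star]
  ring

end PartialTranspose

lemma frustum_value_lt {m N q s t : ℝ} (hm : 0 < m) (hmN : m < N) (hq : 1 ≤ m * q)
    (ht : s * ((N * q - 1) / (N / m - 1)) < t) :
    (1 - t) * N⁻¹ + t * ((N - q⁻¹)⁻¹ * (1 - q⁻¹ * m⁻¹)) < (1 - s) / N := by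
  have hq0 : 0 < q := pos_of_mul_pos_right (one_pos.trans_le hq) hm.le
  have hN : 0 < N := hm.trans hmN
  have hNq : 0 < N * q - 1 := by nlinarith
  have hNm : 0 < N / m - 1 := by rw [sub_pos, one_lt_div hm]; exact hmN
  rw [mul_div_assoc', div_lt_iff₀ hNm] at ht
  have hthreshold : s * m * (N * q - 1) < t * (N - m) := by
    have := mul_lt_mul_of_pos_right ht hm
    field_simp at this
    linarith
  rw [div_eq_mul_inv, ← sub_pos]
  field_simp
  nlinarith

lemma frustum_threshold_nonneg {m N q s : ℝ} (hm : 0 < m) (hmN : m < N) (hq : 1 ≤ m * q)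
    (hs : 0 ≤ s) : 0 ≤ s * ((N * q - 1) / (N / m - 1)) := by
  refine mul_nonneg hs (div_nonneg ?_ ?_)
  · nlinarith
  · rw [sub_nonneg, one_le_div hm]; exact hmN.le

lemma re_trace_mul_frustum {n : Type*} [Fintype n] [DecidableEq n] {m N : ℕ} (hm : m ≠ 0)
    {φ : Fin m → n → ℂ} (hφ : ∀ k l, star (φ k) ⬝ᵥ φ l = if k = l then 1 else 0)
    {p : Fin m → ℝ} (hp : ∑ k, p k = 1) (b t : ℝ) :
    (trace (((m : ℂ)⁻¹ • ∑ k, outer (φ k)) *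
      ((1 - (t : ℂ)) • ((N : ℂ)⁻¹ • 1) +
        (t : ℂ) • (((N : ℂ) - b)⁻¹ • (1 - (b : ℂ) • ∑ k, (p k : ℂ) • outer (φ k)))))).re =
      (1 - t) * (N : ℝ)⁻¹ + t * (((N : ℝ) - b)⁻¹ * (1 - b * (m : ℝ)⁻¹)) := by
  rw [← Complex.ofReal_re ((1 - t) * (N : ℝ)⁻¹ + t * (((N : ℝ) - b)⁻¹ * (1 - b * (m : ℝ)⁻¹)))]
  congr 1
  have hpC : ∑ k, (p k : ℂ) = 1 := by exact_mod_cast hp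
  have hmC : (m : ℂ) ≠ 0 := Nat.cast_ne_zero.mpr hm
  simp only [smul_mul_assoc, mul_add, Matrix.mul_smul, mul_sub, mul_one, trace_add, trace_smul,
    trace_sub, trace_sum_outer hφ, trace_sum_outer_mul_sum_smul_outer hφ, hpC, Fintype.card_fin,
    smul_eq_mul]
  push_cast
  field_simp

lemma posSemidef_ptrans_frustum {d₁ d₂ m N : ℕ} {α : Fin m → Fin d₁ → ℂ}
    {β : Fin m → Fin d₂ → ℂ}
    (horth : ∀ k l, star (fun q : Fin d₁ × Fin d₂ => α k q.1 * β k q.2) ⬝ᵥ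
      (fun q => α l q.1 * β l q.2) = if k = l then 1 else 0)
    {p : Fin m → ℝ} {b t : ℝ} (hbp : ∀ k, b * p k ≤ 1) (hbN : b < N) (ht0 : 0 ≤ t)
    (ht1 : t ≤ 1) :
    (ptrans ((1 - (t : ℂ)) • ((N : ℂ)⁻¹ • 1) + (t : ℂ) • (((N : ℂ) - b)⁻¹ •
      (1 - (b : ℂ) • ∑ k, (p k : ℂ) •
        outer fun q : Fin d₁ × Fin d₂ => α k q.1 * β k q.2)))).PosSemidef := by
  simp only [ptrans_add, ptrans_smul, ptrans_sub, ptrans_one, ptrans_sum, ptrans_outer_prod]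
  have hρ : (1 - (b : ℂ) • ∑ k, (p k : ℂ) •
      outer fun q : Fin d₁ × Fin d₂ => α k q.1 * star (β k q.2)).PosSemidef := by
    simp only [Finset.smul_sum, smul_smul, ← Complex.ofReal_mul]
    exact posSemidef_one_sub_sum_smul_outer (orthonormal_prod_star_snd horth) hbp
  have hN : (0 : ℂ) ≤ (N : ℂ)⁻¹ := by exact_mod_cast inv_nonneg.mpr (Nat.cast_nonneg' N)
  have hNb : (0 : ℂ) ≤ ((N : ℂ) - b)⁻¹ := by
    exact_mod_cast inv_nonneg.mpr (sub_nonneg.mpr hbN.le)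
  exact ((PosSemidef.one.smul hN).smul (by exact_mod_cast sub_nonneg.mpr ht1)).add
    ((hρ.smul hNb).smul (by exact_mod_cast ht0))

theorem stmt10_general {d₁ d₂ m N : ℕ} (hm : m < N) (hm0 : 0 < m)
    (α : Fin m → Fin d₁ → ℂ) (β : Fin m → Fin d₂ → ℂ)
    (φ : Fin m → Fin d₁ × Fin d₂ → ℂ)
    (hprod : ∀ k, φ k = fun p => α k p.1 * β k p.2)
    (horth : ∀ k l, star (φ k) ⬝ᵥ φ l = if k = l then 1 else 0)
    (μ₀ D₀ : Matrix (Fin d₁ × Fin d₂) (Fin d₁ × Fin d₂) ℂ)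
    (hμ₀ : μ₀ = (m : ℂ)⁻¹ • ∑ k, outer (φ k))
    (hD₀ : D₀ = (N : ℂ)⁻¹ • 1)
    (ε : ℝ)
    (hε : ε / m = sInf ((fun σ => (Matrix.trace (μ₀ * σ)).re) '' SepSet d₁ d₂))
    (hεsmall : N * ε / m < 1)
    (s₀ : ℝ) (hs₀ : s₀ = 1 - ε * N / m)
    (p : Fin m → ℝ) (hpsum : ∑ k, p k = 1)
    (kmax : Fin m) (hkmax : ∀ k, p k ≤ p kmax)
    (μp : Matrix (Fin d₁ × Fin d₂) (Fin d₁ × Fin d₂) ℂ)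
    (hμp : μp = ∑ k, (p k : ℂ) • outer (φ k))
    (b : ℝ) (hb : b = (p kmax)⁻¹)
    (ρp : Matrix (Fin d₁ × Fin d₂) (Fin d₁ × Fin d₂) ℂ)
    (hρp : ρp = ((N : ℂ) - (b : ℂ))⁻¹ • (1 - (b : ℂ) • μp)) :
    ∀ t : ℝ, s₀ * ((N * p kmax - 1) / ((N : ℝ) / m - 1)) < t → t ≤ 1 →
      (((1 : ℂ) - (t : ℂ)) • D₀ + (t : ℂ) • ρp) ∉ SepSet d₁ d₂ ∧
      (ptrans (((1 : ℂ) - (t : ℂ)) • D₀ + (t : ℂ) • ρp)).PosSemidef := by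
  intro t ht ht1
  obtain rfl : φ = fun k q => α k q.1 * β k q.2 := funext hprod
  subst hD₀ hμp hρp hb
  beta_reduce at horth hμ₀ ⊢
  have hmR : (0 : ℝ) < m := Nat.cast_pos.mpr hm0
  have hmN : (m : ℝ) < N := Nat.cast_lt.mpr hm
  have hpmax : 1 ≤ (m : ℝ) * p kmax := by
    simpa [hpsum] using Finset.sum_le_card_nsmul Finset.univ p (p kmax) fun k _ => hkmax k
  have hpmax0 : 0 < p kmax := pos_of_mul_pos_right (one_pos.trans_le hpmax) hmR.le
  have hbp (k : Fin m) : (p kmax)⁻¹ * p k ≤ 1 := by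
    rw [inv_mul_le_iff₀ hpmax0, mul_one]; exact hkmax k
  have hbN : (p kmax)⁻¹ < N := ((inv_le_iff_one_le_mul₀ hpmax0).mpr hpmax).trans_lt hmN
  have hNR : (0 : ℝ) < N := hmR.trans hmN
  have hεm : ε / m = (1 - s₀) / N := by rw [hs₀]; field_simp; ring
  have hs₀_nonneg : 0 ≤ s₀ := by rw [hs₀, sub_nonneg, mul_comm ε]; exact hεsmall.le
  have ht0 : 0 ≤ t := (frustum_threshold_nonneg hmR hmN hpmax hs₀_nonneg).trans ht.le
  have hμ₀psd : μ₀.PosSemidef := hμ₀ ▸ (posSemidef_sum _ fun k _ => posSemidef_outer _).smul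
    (by exact_mod_cast inv_nonneg.mpr (Nat.cast_nonneg' m))
  refine ⟨notMem_sepSet_of_re_trace_lt_sInf hμ₀psd ?_,
    posSemidef_ptrans_frustum horth hbp hbN ht0 ht1⟩
  rw [← hε, hεm, hμ₀, re_trace_mul_frustum hm0.ne' horth hpsum]
  exact frustum_value_lt hmR hmN hpmax ht

/-- Frustum of inseparable PPT states from an orthogonal UPB: for
`λ(t) = (1-t)D₀ + tρ(p)` with `ρ(p)` the far-face density (`b = 1/p_max`),
`λ(t)` is an inseparable PPT state whenever
`s₀ (N p_max - 1)/(N/m - 1) < t ≤ 1`, where `s₀ = 1 - εN/m`. -/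
theorem stmt10 {d₁ d₂ m N : ℕ} (hN : N = d₁ * d₂) (hm : m < N) (hm0 : 0 < m)
    (α : Fin m → Fin d₁ → ℂ) (β : Fin m → Fin d₂ → ℂ)
    (φ : Fin m → Fin d₁ × Fin d₂ → ℂ)
    (hprod : ∀ k, φ k = fun p => α k p.1 * β k p.2)
    (horth : ∀ k l, star (φ k) ⬝ᵥ φ l = if k = l then 1 else 0)
    (hUPB : ∀ (a : Fin d₁ → ℂ) (b : Fin d₂ → ℂ),
      (∀ k, star (fun p : Fin d₁ × Fin d₂ => a p.1 * b p.2) ⬝ᵥ φ k = 0) →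
      (fun p : Fin d₁ × Fin d₂ => a p.1 * b p.2) = 0)
    (μ₀ D₀ : Matrix (Fin d₁ × Fin d₂) (Fin d₁ × Fin d₂) ℂ)
    (hμ₀ : μ₀ = (m : ℂ)⁻¹ • ∑ k, outer (φ k))
    (hD₀ : D₀ = (N : ℂ)⁻¹ • 1)
    (ε : ℝ)
    (hε : ε / m = sInf ((fun σ => (Matrix.trace (μ₀ * σ)).re) '' SepSet d₁ d₂))
    (hεpos : 0 < ε) (hεsmall : N * ε / m < 1)
    (s₀ : ℝ) (hs₀ : s₀ = 1 - ε * N / m)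
    (p : Fin m → ℝ) (hp : ∀ k, 0 ≤ p k) (hpsum : ∑ k, p k = 1)
    (kmax : Fin m) (hkmax : ∀ k, p k ≤ p kmax)
    (μp : Matrix (Fin d₁ × Fin d₂) (Fin d₁ × Fin d₂) ℂ)
    (hμp : μp = ∑ k, (p k : ℂ) • outer (φ k))
    (b : ℝ) (hb : b = (p kmax)⁻¹)
    (ρp : Matrix (Fin d₁ × Fin d₂) (Fin d₁ × Fin d₂) ℂ)
    (hρp : ρp = ((N : ℂ) - (b : ℂ))⁻¹ • (1 - (b : ℂ) • μp)) :
    ∀ t : ℝ, s₀ * ((N * p kmax - 1) / ((N : ℝ) / m - 1)) < t → t ≤ 1 →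
      (((1 : ℂ) - (t : ℂ)) • D₀ + (t : ℂ) • ρp) ∉ SepSet d₁ d₂ ∧
      (ptrans (((1 : ℂ) - (t : ℂ)) • D₀ + (t : ℂ) • ρp)).PosSemidef :=
  stmt10_general hm hm0 α β φ hprod horth μ₀ D₀ hμ₀ hD₀ ε hε hεsmall s₀ hs₀ p hpsum kmax hkmax μp
    hμp b hb ρp hρp
end
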